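/- arXiv:1909.12076 — 5 statements merged into one kernel-verified Lean document; each statement's English description precedes it below -/
import Mathlib

section
/- For every real t with -p < t < p (p a positive real), the series ∑_{j ∈ ℤ, j ≠ 0} 1/((2pj - t)² - p²) converges and equals 1/(p² - t²). -/
/-!
For `j ≥ 1`, `(2pj - t)² - p² = (2p(j-1) + p - t)(2pj + p - t)` is a product of consecutive terms
of an arithmetic progression with difference `2p`, so the partial fraction
`1/(xy) = (1/2p)(1/x - 1/y)` makes the sum over `j ≥ 1` telescope to `1/(2p(p - t))`; by the
symmetry `j ↦ -j`, `t ↦ -t` the sum over `j ≤ -1` is `1/(2p(p + t))`, and the two add up to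
`1/(p² - t²)`.
-/

open Filter Topology

theorem hasSum_sub_succ_of_antitone {d : ℕ → ℝ} {l : ℝ} (hd : Antitone d)
    (hl : Tendsto d atTop (𝓝 l)) :
    HasSum (fun n => d n - d (n + 1)) (d 0 - l) := by
  rw [hasSum_iff_tendsto_nat_of_nonneg (fun n => sub_nonneg.2 (hd n.le_succ))]
  simp_rw [Finset.sum_range_sub']
  exact tendsto_const_nhds.sub hl

theorem hasSum_one_div_arith_mul_arith_succ {c a : ℝ} (hc : 0 < c) (ha : 0 < a) :
    HasSum (fun n : ℕ => 1 / ((c * n + a) * (c * (n + 1) + a))) (1 / (c * a)) := by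
  set d : ℕ → ℝ := fun n => 1 / c * (1 / (c * n + a))
  have hpos : ∀ x : ℝ, 0 ≤ x → 0 < c * x + a := fun x hx => by positivity
  have hd : Antitone d := by
    refine antitone_nat_of_succ_le fun n => ?_
    simp only [d]
    gcongr
    exact n.le_succ
  have hl : Tendsto d atTop (𝓝 0) := by
    have : Tendsto (fun n : ℕ => c * n + a) atTop atTop :=
      tendsto_atTop_add_const_right _ a
        ((tendsto_natCast_atTop_atTop (R := ℝ)).const_mul_atTop hc)
    simpa [d] using (this.inv_tendsto_atTop.const_mul (1 / c))
  convert hasSum_sub_succ_of_antitone hd hl using 1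
  · funext n
    have h₀ := hpos n n.cast_nonneg
    have h₁ := hpos (n + 1) (by positivity)
    simp only [d]
    push_cast
    field_simp
    ring
  · simp [d, mul_comm]

theorem hasSum_one_div_sq_sub_sq {p s : ℝ} (hp : 0 < p) (hs : s < p) :
    HasSum (fun n : ℕ => 1 / ((2 * p * (n + 1) - s) ^ 2 - p ^ 2)) (1 / (2 * p * (p - s))) := by
  convert hasSum_one_div_arith_mul_arith_succ (by positivity : 0 < 2 * p) (sub_pos.2 hs)
    using 3 with n
  ring

/-- For `p > 0` and `t ∈ (-p, p)`, `∑_{j ≠ 0} 1/((2pj - t)² - p²) = 1/(p² - t²)`. -/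
theorem stmt1 (p t : ℝ) (hp : 0 < p) (ht : t ∈ Set.Ioo (-p) p) :
    HasSum (fun j : {j : ℤ // j ≠ 0} =>
        1 / ((2 * p * ((j : ℤ) : ℝ) - t) ^ 2 - p ^ 2))
      (1 / (p ^ 2 - t ^ 2)) := by
  obtain ⟨htl, htr⟩ := ht
  set f : ℤ → ℝ := fun j => 1 / ((2 * p * j - t) ^ 2 - p ^ 2)
  have hpos : HasSum (fun n : ℕ => f (n + 1)) (1 / (2 * p * (p - t))) := by
    simpa [f] using hasSum_one_div_sq_sub_sq hp htr
  have hneg : HasSum (fun n : ℕ => f (-(n + 1))) (1 / (2 * p * (p + t))) := by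
    convert hasSum_one_div_sq_sub_sq hp (s := -t) (by linarith) using 2 with n
    · simp only [f]; push_cast; ring
    · ring
  have hsum : HasSum f (f 0 + 1 / (p ^ 2 - t ^ 2)) := by
    have hval : 1 / (2 * p * (p - t)) + 1 / (2 * p * (p + t)) = 1 / (p ^ 2 - t ^ 2) := by
      have : p - t ≠ 0 := by linarith
      have : p + t ≠ 0 := by linarith
      rw [show p ^ 2 - t ^ 2 = (p - t) * (p + t) by ring]
      field_simp
      ring
    convert hpos.of_add_one_of_neg_add_one hneg using 1
    rw [← hval]
    ring
  -- `{j : ℤ // j ≠ 0}` is definitionally the subtype of `({0}ᶜ : Set ℤ)`.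
  exact (hasSum_singleton 0 f).hasSum_compl_iff.mpr hsum
end

section
/- Let p ∈ ℕ, p ≥ 1, β > p, z₁ = p(1 + i√(β/p - 1)), z₂ = p(-1 + i√(β/p - 1)). Then for all n ∈ ℤ: e^{πi(n + 1/p) z₁} = e^{πi(n + 1/p) z₂} when n ≥ 0, e^{πi(n + 1/p) \overline{z₁}} = e^{πi(n + 1/p) \overline{z₂}} when n < 0, e^{πinβ/\overline{z₁}} = e^{πinβ/\overline{z₂}} when n ≥ 0, and e^{πinβ/z₁} = e^{πinβ/z₂} when n < 0. -/
/-!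
The two points differ by `2p` and, since `(1 + i s)(-1 + i s) = -(1 + s²) = -β/p`, their product
is `-pβ`; the same holds for their conjugates. A difference `2p` shifts the exponent
`πi(n + 1/p) z` by `2πi(np + 1)`, and then `β/z₂ - β/z₁ = β(z₁ - z₂)/(z₁ z₂) = -2` shifts the
exponent `πinβ/z` by `2πin`. Both shifts are invisible to `exp`.
-/

open Complex
open scoped Real ComplexConjugate

theorem exp_pi_I_mul_add_inv_mul_eq_of_sub_eq {p : ℤ} (hp : (p : ℂ) ≠ 0) (n : ℤ) {w₁ w₂ : ℂ}
    (hsub : w₁ - w₂ = 2 * p) :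
    exp (π * I * (n + 1 / p) * w₁) = exp (π * I * (n + 1 / p) * w₂) := by
  refine exp_eq_exp_iff_exists_int.mpr ⟨n * p + 1, ?_⟩
  push_cast
  field_simp
  linear_combination (n * p + 1 : ℂ) * hsub

theorem exp_pi_I_mul_div_eq_of_sub_eq_of_mul_eq {c β w₁ w₂ : ℂ} (hcβ : c * β ≠ 0) (n : ℤ)
    (hsub : w₁ - w₂ = 2 * c) (hmul : w₁ * w₂ = -(c * β)) :
    exp (π * I * n * β / w₁) = exp (π * I * n * β / w₂) := by
  have hw : w₁ * w₂ ≠ 0 := by rw [hmul]; exact neg_ne_zero.mpr hcβ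
  have hw₁ : w₁ ≠ 0 := left_ne_zero_of_mul hw
  have hw₂ : w₂ ≠ 0 := right_ne_zero_of_mul hw
  refine exp_eq_exp_iff_exists_int.mpr ⟨n, ?_⟩
  field_simp
  linear_combination (-(n : ℂ) * β) * hsub - (2 * (n : ℂ)) * hmul

theorem one_add_I_mul_mul_neg_one_add_I_mul {c s β : ℂ} (hs : c * s ^ 2 = β - c) :
    (c * (1 + I * s)) * (c * (-1 + I * s)) = -(c * β) := by
  linear_combination c ^ 2 * s ^ 2 * I_sq - c * hs

theorem mul_sqrt_div_sub_one_sq {p β : ℝ} (hp : 0 < p) (hβ : p ≤ β) :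
    p * √(β / p - 1) ^ 2 = β - p := by
  rw [Real.sq_sqrt (by rw [sub_nonneg, one_le_div hp]; exact hβ)]
  field_simp

/-- For `p ∈ ℕ`, `p ≥ 1`, `β > p`, `z₁ = p(1 + i√(β/p - 1))`, `z₂ = p(-1 + i√(β/p - 1))`,
the extended functions `e^p_n` and `e^β_n` agree at `z₁` and `z₂` for all `n ∈ ℤ`. -/
theorem stmt3 (p : ℕ) (hp : 1 ≤ p) (β : ℝ) (hβ : (p : ℝ) < β) (n : ℤ) :
    let z₁ : ℂ := (p : ℂ) * (1 + Complex.I * (Real.sqrt (β / p - 1) : ℝ))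
    let z₂ : ℂ := (p : ℂ) * (-1 + Complex.I * (Real.sqrt (β / p - 1) : ℝ))
    (0 ≤ n → Complex.exp ((Real.pi : ℂ) * Complex.I * ((n : ℂ) + 1 / (p : ℂ)) * z₁)
      = Complex.exp ((Real.pi : ℂ) * Complex.I * ((n : ℂ) + 1 / (p : ℂ)) * z₂)) ∧
    (n < 0 → Complex.exp ((Real.pi : ℂ) * Complex.I * ((n : ℂ) + 1 / (p : ℂ)) * (starRingEnd ℂ) z₁)
      = Complex.exp ((Real.pi : ℂ) * Complex.I * ((n : ℂ) + 1 / (p : ℂ)) * (starRingEnd ℂ) z₂)) ∧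
    (0 ≤ n → Complex.exp ((Real.pi : ℂ) * Complex.I * (n : ℂ) * (β : ℂ) / (starRingEnd ℂ) z₁)
      = Complex.exp ((Real.pi : ℂ) * Complex.I * (n : ℂ) * (β : ℂ) / (starRingEnd ℂ) z₂)) ∧
    (n < 0 → Complex.exp ((Real.pi : ℂ) * Complex.I * (n : ℂ) * (β : ℂ) / z₁)
      = Complex.exp ((Real.pi : ℂ) * Complex.I * (n : ℂ) * (β : ℂ) / z₂)) := by
  intro z₁ z₂
  have hp₀ : (0 : ℝ) < p := by exact_mod_cast hp
  have hp₀' : ((p : ℤ) : ℂ) ≠ 0 := by exact_mod_cast hp₀.ne'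
  have hpβ : (p : ℂ) * β ≠ 0 := by exact_mod_cast (mul_pos hp₀ (hp₀.trans hβ)).ne'
  have hsub : z₁ - z₂ = 2 * p := by ring
  have hmul : z₁ * z₂ = -(p * β) :=
    one_add_I_mul_mul_neg_one_add_I_mul (by exact_mod_cast mul_sqrt_div_sub_one_sq hp₀ hβ.le)
  have hsub' : conj z₁ - conj z₂ = 2 * p := by rw [← map_sub, hsub]; simp [map_ofNat]
  have hmul' : conj z₁ * conj z₂ = -(p * β) := by rw [← map_mul, hmul]; simp
  refine ⟨fun _ => ?_, fun _ => ?_, fun _ => ?_, fun _ => ?_⟩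
  · simpa using exp_pi_I_mul_add_inv_mul_eq_of_sub_eq hp₀' n (by simpa using hsub)
  · simpa using exp_pi_I_mul_add_inv_mul_eq_of_sub_eq hp₀' n (by simpa using hsub')
  · exact exp_pi_I_mul_div_eq_of_sub_eq_of_mul_eq hpβ n hsub' hmul'
  · exact exp_pi_I_mul_div_eq_of_sub_eq_of_mul_eq hpβ n hsub hmul
end

section
/- Let p > 0 and j be a nonzero integer. The map τ defined by τ(x) = -p/x + 2j is a bijection from the interval (p/(2j+1), p/(2j-1)] onto (-1, 1], and τ(x) = {-p/x}_2 for all x in this interval. -/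
/-- `{u}₂`: the unique element of `(-1, 1]` with `u - {u}₂ ∈ 2ℤ`. -/
noncomputable def frac2 (u : ℝ) : ℝ := u - 2 * ⌈(u - 1) / 2⌉

/-!
Put `c = 2j`, so `|c| > 1`. For `x` of the sign of `c`, the inequalities `p/(c+1) < x ≤ p/(c-1)`
say exactly that `c - 1 ≤ p/x < c + 1`, so `x ↦ c - p/x` maps the interval into `(-1, 1]`,
with inverse `y ↦ p/(c - y)`. Since `-p/x` and `-p/x + 2j` differ by an even integer and the
latter lies in `(-1, 1]`, the latter is `{-p/x}₂`.
-/

open Set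

section SameSign

variable {K : Type*} [Field K] [LinearOrder K] [IsStrictOrderedRing K] {a b p : K}

lemma le_div_comm_of_mul_pos (h : 0 < a * b) : a ≤ p / b ↔ b ≤ p / a := by
  rcases pos_and_pos_or_neg_and_neg_of_mul_pos h with ⟨ha, hb⟩ | ⟨ha, hb⟩
  · exact le_div_comm₀ ha hb
  · rw [le_div_iff_of_neg hb, le_div_iff_of_neg ha, mul_comm]

lemma div_lt_comm_of_mul_pos (h : 0 < a * b) : p / b < a ↔ p / a < b := by
  simpa only [not_le] using (le_div_comm_of_mul_pos (p := p) (mul_comm a b ▸ h)).not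

end SameSign

lemma div_mem_Ico_iff_mem_Ioc {p c x : ℝ} (hp : 0 < p) (hc : 1 < |c|) :
    p / x ∈ Ico (c - 1) (c + 1) ↔ x ∈ Ioc (p / (c + 1)) (p / (c - 1)) := by
  suffices hsign : p / x ∈ Ico (c - 1) (c + 1) ∨ x ∈ Ioc (p / (c + 1)) (p / (c - 1)) →
      0 < (c - 1) * x ∧ 0 < (c + 1) * x by
    constructor
    · intro hx
      obtain ⟨h₁, h₂⟩ := hsign (.inl hx)
      exact ⟨(div_lt_comm_of_mul_pos h₂).1 hx.2, (le_div_comm_of_mul_pos h₁).1 hx.1⟩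
    · intro hx
      obtain ⟨h₁, h₂⟩ := hsign (.inr hx)
      exact ⟨(le_div_comm_of_mul_pos h₁).2 hx.2, (div_lt_comm_of_mul_pos h₂).2 hx.1⟩
  intro hx
  rcases lt_abs.mp hc with hc | hc
  · have hx0 : 0 < x := by
      rcases hx with ⟨h, -⟩ | ⟨h, -⟩
      · exact (div_pos_iff_of_pos_left hp).1 (by linarith)
      · exact lt_trans (div_pos hp (by linarith)) h
    constructor <;> nlinarith
  · have hx0 : x < 0 := by
      rcases hx with ⟨-, h⟩ | ⟨-, h⟩
      · exact neg_of_div_neg_right (by linarith) hp.le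
      · exact h.trans_lt (div_neg_of_pos_of_neg hp (by linarith))
    constructor <;> nlinarith

lemma bijOn_neg_div_add {p c : ℝ} (hp : 0 < p) (hc : 1 < |c|) :
    BijOn (fun x ↦ -p / x + c) (Ioc (p / (c + 1)) (p / (c - 1))) (Ioc (-1) 1) := by
  have hmaps : MapsTo (fun x ↦ -p / x + c) (Ioc (p / (c + 1)) (p / (c - 1))) (Ioc (-1) 1) := by
    intro x hx
    obtain ⟨h₁, h₂⟩ := (div_mem_Ico_iff_mem_Ioc hp hc).2 hx
    simp only [mem_Ioc, neg_div]
    constructor <;> linarith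
  refine InvOn.bijOn (f' := fun y ↦ p / (c - y)) ⟨fun x _ ↦ ?_, fun y _ ↦ ?_⟩ hmaps fun y hy ↦ ?_
  · simp only [sub_add_cancel_right, neg_div, neg_neg, div_div_cancel₀ hp.ne']
  · simp only [neg_div, div_div_cancel₀ hp.ne']
    ring
  · rw [← div_mem_Ico_iff_mem_Ioc hp hc, div_div_cancel₀ hp.ne']
    constructor <;> linarith [hy.1, hy.2]

lemma frac2_eq_add_of_mem_Ioc {u : ℝ} {k : ℤ} (h : u + 2 * k ∈ Ioc (-1) 1) :
    frac2 u = u + 2 * k := by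
  have hceil : ⌈(u - 1) / 2⌉ = -k := by
    rw [Int.ceil_eq_iff]
    push_cast
    constructor <;> linarith [h.1, h.2]
  rw [frac2, hceil]
  push_cast
  ring

/-- For `p > 0` and a nonzero integer `j`, the map `x ↦ -p/x + 2j` is a bijection from
`(p/(2j+1), p/(2j-1)]` onto `(-1, 1]`, and on this interval it agrees with `{-p/x}₂`. -/
theorem stmt4 (p : ℝ) (hp : 0 < p) (j : ℤ) (hj : j ≠ 0) :
    Set.BijOn (fun x : ℝ => -p / x + 2 * (j : ℝ))
      (Set.Ioc (p / (2 * (j : ℝ) + 1)) (p / (2 * (j : ℝ) - 1)))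
      (Set.Ioc (-1 : ℝ) 1) ∧
    ∀ x ∈ Set.Ioc (p / (2 * (j : ℝ) + 1)) (p / (2 * (j : ℝ) - 1)),
      -p / x + 2 * (j : ℝ) = frac2 (-p / x) := by
  have hc : 1 < |2 * (j : ℝ)| := by
    have : (1 : ℝ) ≤ |(j : ℝ)| := by exact_mod_cast Int.one_le_abs hj
    rw [abs_mul, abs_two]
    linarith
  have hbij := bijOn_neg_div_add hp hc
  exact ⟨hbij, fun x hx ↦ (frac2_eq_add_of_mem_Ioc (hbij.mapsTo hx)).symm⟩
end

section
/- Let p > 0 and 0 < β ≤ p. The Perron–Frobenius operator P_β : L¹((-p,p]) → L¹((-p,p]) defined by P_β[f](x) = ∑_{j ∈ ℤ, j ≠ 0} (pβ/(2pj - x)²) f(pβ/(2pj - x)) is a well-defined linear operator satisfying ‖P_β[f]‖_{L¹} ≤ ‖f‖_{L¹} for all f ∈ L¹((-p,p]). -/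
/-!
Each term of `P_β[f]` is `φⱼ' · (f ∘ φⱼ)` for the inverse branch `φⱼ(x) = pβ/(2pj - x)`, whose
derivative `pβ/(2pj - x)²` is positive. By the one-dimensional change of variables, the `L¹` norm
of this term over `(-p, p]` equals the integral of `‖f‖` over `φⱼ((-p, p])`. These images lie in
`(-β, β] ⊆ (-p, p]` and are pairwise disjoint, since `φⱼ x = φₖ y` forces
`2p(j - k) = x - y ∈ (-2p, 2p)`. Hence the `L¹` norms of the terms sum to at most `‖f‖₁`, and by
monotone convergence the series converges absolutely almost everywhere to an integrable function
of norm at most `‖f‖₁`.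
-/

open MeasureTheory Set Function

theorem div_right_inj₀ {G₀ : Type*} [GroupWithZero G₀] {a b c : G₀} (ha : a ≠ 0) :
    a / b = a / c ↔ b = c := by
  rw [div_eq_mul_inv, div_eq_mul_inv, mul_right_inj' ha, inv_inj]

theorem ofReal_mul_eq_abs_smul {r : ℝ} (hr : 0 ≤ r) (z : ℂ) : (r : ℂ) * z = |r| • z := by
  rw [abs_of_nonneg hr, Complex.real_smul]

section TsumIntegrable

variable {α E ι : Type*} [MeasurableSpace α] {μ : Measure α} [NormedAddCommGroup E]
  [Countable ι] {f : ι → α → E}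

theorem lintegral_enorm_tsum_le (hf : ∀ i, AEStronglyMeasurable (f i) μ) :
    ∫⁻ a, ‖∑' i, f i a‖ₑ ∂μ ≤ ∑' i, ∫⁻ a, ‖f i a‖ₑ ∂μ :=
  calc ∫⁻ a, ‖∑' i, f i a‖ₑ ∂μ ≤ ∫⁻ a, ∑' i, ‖f i a‖ₑ ∂μ :=
        lintegral_mono fun _ => enorm_tsum_le_tsum_enorm
    _ = ∑' i, ∫⁻ a, ‖f i a‖ₑ ∂μ := lintegral_tsum fun i => (hf i).enorm

theorem integrable_tsum_of_tsum_lintegral_enorm_ne_top [CompleteSpace E]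
    (hf : ∀ i, AEStronglyMeasurable (f i) μ) (hf' : ∑' i, ∫⁻ a, ‖f i a‖ₑ ∂μ ≠ ⊤) :
    Integrable (fun a => ∑' i, f i a) μ := by
  have hsum : ∀ᵐ a ∂μ, Summable fun i => ‖f i a‖ :=
    summable_norm_of_tsum_eLpNorm_ne_top le_rfl hf (by simpa [eLpNorm_one_eq_lintegral_enorm])
  have hmeas : AEStronglyMeasurable (fun a => ∑' i, f i a) μ :=
    aestronglyMeasurable_of_tendsto_ae Filter.atTop
      (fun s => s.aestronglyMeasurable_fun_sum fun i _ => hf i)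
      (hsum.mono fun _ ha => ha.of_norm.hasSum)
  exact ⟨hmeas, (lintegral_enorm_tsum_le hf).trans_lt hf'.lt_top⟩

end TsumIntegrable

section ChangeOfVariables

variable {ι : Type*} [Countable ι] {s t : Set ℝ} {φ φ' : ι → ℝ → ℝ}

theorem tsum_lintegral_abs_deriv_mul_comp_le (hs : MeasurableSet s)
    (hφ' : ∀ i, ∀ x ∈ s, HasDerivWithinAt (φ i) (φ' i x) s x) (hφ : ∀ i, InjOn (φ i) s)
    (hst : ∀ i, MapsTo (φ i) s t) (hdisj : Pairwise (Disjoint on fun i => φ i '' s))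
    (g : ℝ → ENNReal) :
    ∑' i, ∫⁻ x in s, ENNReal.ofReal |φ' i x| * g (φ i x) ≤ ∫⁻ x in t, g x := by
  have himage : ∀ i, MeasurableSet (φ i '' s) := fun i =>
    measurable_image_of_fderivWithin hs (fun x hx => (hφ' i x hx).hasFDerivWithinAt) (hφ i)
  simp_rw [← lintegral_image_eq_lintegral_abs_deriv_mul hs (hφ' _) (hφ _),
    ← lintegral_iUnion himage hdisj]
  exact lintegral_mono_set (iUnion_subset fun i => (hst i).image_subset)

end ChangeOfVariables

section InverseBranches

variable {p β : ℝ}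

-- The inverse branches of `U_β(x) = p·{-β/x}₂`, one for each `j ≠ 0`.
noncomputable def invBranch (p β : ℝ) (j : ℤ) (x : ℝ) : ℝ := p * β / (2 * p * j - x)

theorem hasDerivAt_invBranch {j : ℤ} {x : ℝ} (hx : 2 * p * j - x ≠ 0) :
    HasDerivAt (invBranch p β j) (p * β / (2 * p * j - x) ^ 2) x := by
  have h : HasDerivAt (fun y => p * β / (2 * p * j - y))
      ((0 * (2 * p * j - x) - p * β * (-1)) / (2 * p * j - x) ^ 2) x :=
    (hasDerivAt_const x (p * β)).div ((hasDerivAt_id' x).const_sub _) hx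
  exact h.congr_deriv (by ring)

theorem invBranch_denom_lt_neg_or_le {j : ℤ} (hj : j ≠ 0) {x : ℝ} (hx : x ∈ Ioc (-p) p) :
    2 * p * j - x < -p ∨ p ≤ 2 * p * j - x := by
  rcases lt_or_gt_of_ne hj with h | h
  · have : (j : ℝ) ≤ -1 := by exact_mod_cast Int.le_sub_one_of_lt h
    left; nlinarith [hx.1, hx.2]
  · have : (1 : ℝ) ≤ j := by exact_mod_cast h
    right; nlinarith [hx.1, hx.2]

theorem hasDerivWithinAt_invBranch (hp : 0 < p) {j : ℤ} (hj : j ≠ 0) {x : ℝ}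
    (hx : x ∈ Ioc (-p) p) (s : Set ℝ) :
    HasDerivWithinAt (invBranch p β j) (p * β / (2 * p * j - x) ^ 2) s x := by
  refine (hasDerivAt_invBranch ?_).hasDerivWithinAt
  rcases invBranch_denom_lt_neg_or_le hj hx with h | h
  · exact (h.trans (neg_neg_of_pos hp)).ne
  · exact (hp.trans_le h).ne'

theorem injective_invBranch (hpβ : p * β ≠ 0) (j : ℤ) : Injective (invBranch p β j) :=
  fun x y h => by simpa using (div_right_inj₀ hpβ).1 h

theorem mapsTo_invBranch (hp : 0 < p) (hβ : 0 < β) (hβp : β ≤ p) {j : ℤ} (hj : j ≠ 0) :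
    MapsTo (invBranch p β j) (Ioc (-p) p) (Ioc (-p) p) := by
  intro x hx
  have hpβ : 0 < p * β := mul_pos hp hβ
  unfold invBranch
  rcases invBranch_denom_lt_neg_or_le hj hx with h | h
  · have hneg : 2 * p * j - x < 0 := by linarith
    refine ⟨?_, (div_neg_of_pos_of_neg hpβ hneg).le.trans hp.le⟩
    rw [lt_div_iff_of_neg hneg]
    nlinarith
  · have hpos : 0 < 2 * p * j - x := by linarith
    refine ⟨(neg_neg_of_pos hp).trans (div_pos hpβ hpos), ?_⟩
    rw [div_le_iff₀ hpos]
    nlinarith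

theorem disjoint_image_invBranch (hpβ : p * β ≠ 0) {j k : ℤ} (hjk : j ≠ k) :
    Disjoint (invBranch p β j '' Ioc (-p) p) (invBranch p β k '' Ioc (-p) p) := by
  refine disjoint_left.2 ?_
  rintro _ ⟨x, hx, rfl⟩ ⟨y, hy, hxy⟩
  have hden : 2 * p * k - y = 2 * p * j - x := (div_right_inj₀ hpβ).1 hxy
  have hp : 0 < 2 * p := by linarith [hx.1, hx.2]
  have hdiff : ((k - j : ℤ) : ℝ) * (2 * p) = y - x := by push_cast; linear_combination hden
  have hkj : ((k - j : ℤ) : ℝ) < 1 := lt_of_mul_lt_mul_right (by linarith [hx.1, hy.2]) hp.le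
  have hjk' : ((j - k : ℤ) : ℝ) < 1 :=
    lt_of_mul_lt_mul_right (by push_cast at hdiff ⊢; linarith [hx.2, hy.1]) hp.le
  have : k - j < 1 := by exact_mod_cast hkj
  have : j - k < 1 := by exact_mod_cast hjk'
  omega

end InverseBranches

/-- For `0 < β ≤ p`, the Perron–Frobenius operator
`P_β[f](x) = ∑_{j ≠ 0} (pβ/(2pj - x)²) f(pβ/(2pj - x))` maps `L¹((-p,p])` to itself
and is a norm contraction. -/
theorem stmt8 (p β : ℝ) (hp : 0 < p) (hβ : 0 < β) (hβp : β ≤ p)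
    (f : ℝ → ℂ)
    (hf : Integrable f (volume.restrict (Set.Ioc (-p) p))) :
    Integrable
      (fun x => ∑' j : {j : ℤ // j ≠ 0},
        ((p * β / (2 * p * ((j : ℤ) : ℝ) - x) ^ 2 : ℝ) : ℂ) *
          f (p * β / (2 * p * ((j : ℤ) : ℝ) - x)))
      (volume.restrict (Set.Ioc (-p) p)) ∧
    ∫ x in Set.Ioc (-p) p,
        ‖∑' j : {j : ℤ // j ≠ 0},
          ((p * β / (2 * p * ((j : ℤ) : ℝ) - x) ^ 2 : ℝ) : ℂ) *
            f (p * β / (2 * p * ((j : ℤ) : ℝ) - x))‖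
      ≤ ∫ x in Set.Ioc (-p) p, ‖f x‖ := by
  have hpβ : 0 < p * β := mul_pos hp hβ
  set S := Ioc (-p) p
  set φ' : {j : ℤ // j ≠ 0} → ℝ → ℝ := fun j x => p * β / (2 * p * ((j : ℤ) : ℝ) - x) ^ 2
  have hderiv (j : {j : ℤ // j ≠ 0}) : ∀ x ∈ S, HasDerivWithinAt (invBranch p β j) (φ' j x) S x :=
    fun _ hx => hasDerivWithinAt_invBranch hp j.2 hx S
  have hinj (j : {j : ℤ // j ≠ 0}) : InjOn (invBranch p β j) S :=
    (injective_invBranch hpβ.ne' j).injOn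
  have hmaps (j : {j : ℤ // j ≠ 0}) : MapsTo (invBranch p β j) S S :=
    mapsTo_invBranch hp hβ hβp j.2
  have hterm (j : {j : ℤ // j ≠ 0}) (x : ℝ) :
      (φ' j x : ℂ) * f (invBranch p β j x) = |φ' j x| • f (invBranch p β j x) :=
    ofReal_mul_eq_abs_smul (by positivity) _
  have hint (j : {j : ℤ // j ≠ 0}) :
      Integrable (fun x => (φ' j x : ℂ) * f (invBranch p β j x)) (volume.restrict S) := by
    simp_rw [hterm]
    exact (integrableOn_image_iff_integrableOn_abs_deriv_smul measurableSet_Ioc (hderiv j)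
      (hinj j) f).1 (IntegrableOn.mono_set hf (hmaps j).image_subset)
  have hsum : ∑' j, ∫⁻ x in S, ‖(φ' j x : ℂ) * f (invBranch p β j x)‖ₑ ≤ ∫⁻ x in S, ‖f x‖ₑ := by
    simp_rw [hterm, enorm_smul, Real.enorm_eq_ofReal_abs, abs_abs]
    exact tsum_lintegral_abs_deriv_mul_comp_le measurableSet_Ioc hderiv hinj hmaps
      (fun j k hjk => disjoint_image_invBranch hpβ.ne' (Subtype.coe_injective.ne hjk)) _
  have hF := integrable_tsum_of_tsum_lintegral_enorm_ne_top (fun j => (hint j).1)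
    (hsum.trans_lt hf.2).ne
  refine ⟨hF, ?_⟩
  refine (integral_norm_eq_lintegral_enorm hF.1).trans_le ?_
  rw [integral_norm_eq_lintegral_enorm hf.1]
  exact ENNReal.toReal_mono hf.2.ne ((lintegral_enorm_tsum_le fun j => (hint j).1).trans hsum)
end

section
/- Let p > 0, 0 < β ≤ p, and let C_β be the weighted Koopman operator on L^∞((-p,p]) given by C_β[φ](x) = φ(U_β(x))·χ_{(-β,β]}(x), where U_β(x) = p·{-β/x}_2 for x ≠ 0, U_β(0) = 0. Let T_β S be the composition operator T_β S[φ](x) = φ(p·{(β/p)/{β/x}_2}_2)·χ_{E_β}(x), where E_β = {x ∈ (-β, β], x ≠ 0 : (β/p)/{β/x}_2 ∈ ℝ \ (-1, 1]}. Then T_β S = C_β² as operators on L^∞((-p,p]). -/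
open MeasureTheory

lemma frac2_mem (u : ℝ) : frac2 u ∈ Set.Ioc (-1 : ℝ) 1 := by
  unfold frac2
  constructor
  · have := Int.ceil_lt_add_one ((u - 1) / 2); linarith
  · have := Int.le_ceil ((u - 1) / 2); linarith

lemma frac2_spec (u : ℝ) : ∃ k : ℤ, u - frac2 u = 2 * k :=
  ⟨⌈(u - 1) / 2⌉, by unfold frac2; push_cast; ring⟩

lemma frac2_unique {u v : ℝ} (hv : v ∈ Set.Ioc (-1 : ℝ) 1) (k : ℤ) (h : u - v = 2 * k) :
    frac2 u = v := by
  unfold frac2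
  have h1 : (u - 1) / 2 = (k : ℝ) + (v - 1) / 2 := by linarith
  rw [h1]
  have hc : ⌈(v - 1) / 2⌉ = 0 := by
    rw [Int.ceil_eq_zero_iff]
    constructor
    · simp only [Set.mem_Ioc] at hv ⊢; linarith [hv.1]
    · simp only [Set.mem_Ioc] at hv ⊢; linarith [hv.2]
  rw [add_comm, Int.ceil_add_intCast, hc]
  push_cast
  linarith

lemma frac2_neg {u : ℝ} (h : frac2 u ≠ 1) : frac2 (-u) = -frac2 u := by
  obtain ⟨k, hk⟩ := frac2_spec u
  have hm := frac2_mem u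
  refine frac2_unique ?_ (-k) (by push_cast; linarith)
  simp only [Set.mem_Ioc] at hm ⊢
  constructor
  · have : frac2 u < 1 := lt_of_le_of_ne hm.2 h
    linarith
  · linarith [hm.1]

/-- For `0 < β ≤ p`, the composition operator `T_β S` equals the square of the weighted
Koopman operator `C_β` as operators on `L^∞((-p, p])` (i.e. almost everywhere). -/
theorem stmt9 (p β : ℝ) (hp : 0 < p) (hβ : 0 < β) (hβp : β ≤ p)
    (Uβ : ℝ → ℝ) (hU : ∀ x, Uβ x = if x = 0 then 0 else p * frac2 (-β / x))
    (Cβ : (ℝ → ℂ) → (ℝ → ℂ))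
    (hC : ∀ φ x, Cβ φ x = (Set.Ioc (-β) β).indicator (fun y => φ (Uβ y)) x)
    (Eβ : Set ℝ)
    (hE : Eβ = {x ∈ Set.Ioc (-β) β | x ≠ 0 ∧ (β / p) / frac2 (β / x) ∉ Set.Ioc (-1 : ℝ) 1})
    (TS : (ℝ → ℂ) → (ℝ → ℂ))
    (hTS : ∀ φ x, TS φ x = Eβ.indicator (fun y => φ (p * frac2 ((β / p) / frac2 (β / y)))) x)
    (φ : ℝ → ℂ) :
    ∀ᵐ x ∂(volume.restrict (Set.Ioc (-p) p)), TS φ x = Cβ (Cβ φ) x := by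
  set N : Set ℝ := Set.range (fun n : ℤ => β / (n : ℝ)) with hN
  have hN0 : volume N = 0 := (Set.countable_range _).measure_zero _
  have hae : ∀ᵐ x ∂volume, x ∉ N := by
    rw [ae_iff]; simpa using hN0
  filter_upwards [ae_restrict_of_ae hae] with x hx
  rw [hTS, hC]
  by_cases hxI : x ∈ Set.Ioc (-β) β
  · rw [Set.indicator_of_mem hxI, hC]
    have hx0 : x ≠ 0 := by
      intro h0; exact hx ⟨0, by simp [h0]⟩
    set s := frac2 (β / x) with hs
    have hsm := frac2_mem (β / x)
    simp only [Set.mem_Ioc] at hsm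
    have hs1 : s ≠ 1 := by
      intro h1
      obtain ⟨k, hk⟩ := frac2_spec (β / x)
      rw [← hs, h1] at hk
      have hk0 : (2 * k + 1 : ℤ) ≠ 0 := by omega
      apply hx
      refine ⟨2 * k + 1, ?_⟩
      have hne : ((2 * k + 1 : ℤ) : ℝ) ≠ 0 := Int.cast_ne_zero.mpr hk0
      have hb : β = ((2 * k + 1 : ℤ) : ℝ) * x := by
        have := (div_eq_iff hx0).mp (show β / x = ((2 * k + 1 : ℤ) : ℝ) by push_cast; linarith)
        linarith
      rw [div_eq_iff hne]
      linarith
    have hs0 : s ≠ 0 := by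
      intro h0
      obtain ⟨k, hk⟩ := frac2_spec (β / x)
      rw [← hs, h0] at hk
      have hkne : k ≠ 0 := by
        intro h; rw [h] at hk
        have : β / x = 0 := by push_cast at hk; linarith
        rw [div_eq_zero_iff] at this
        rcases this with h | h
        · exact absurd h hβ.ne'
        · exact hx0 h
      apply hx
      refine ⟨2 * k, ?_⟩
      have hne : ((2 * k : ℤ) : ℝ) ≠ 0 := Int.cast_ne_zero.mpr (by omega)
      have hb : β = ((2 * k : ℤ) : ℝ) * x := by
        have := (div_eq_iff hx0).mp (show β / x = ((2 * k : ℤ) : ℝ) by push_cast; linarith)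
        linarith
      rw [div_eq_iff hne]
      linarith
    have hslt1 : s < 1 := lt_of_le_of_ne hsm.2 hs1
    have ht : frac2 (-β / x) = -s := by rw [neg_div]; exact frac2_neg hs1
    have hUx : Uβ x = -(p * s) := by rw [hU, if_neg hx0, ht]; ring
    have hps0 : -(p * s) ≠ 0 := by
      simp only [neg_ne_zero]
      exact mul_ne_zero hp.ne' hs0
    -- the argument equality
    have harg : (β / p) / s = -β / (-(p * s)) := by
      field_simp
    by_cases hA : Uβ x ∈ Set.Ioc (-β) β
    · -- both sides are φ of the same point
      have hAm : -β < -(p * s) ∧ -(p * s) ≤ β := by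
        rw [hUx] at hA; exact hA
      have hxE : x ∈ Eβ := by
        rw [hE]
        refine ⟨hxI, hx0, ?_⟩
        rw [Set.mem_Ioc]
        push_neg
        intro h1
        rcases lt_or_gt_of_ne hs0 with hneg | hpos
        · exfalso
          have hns : (0:ℝ) < -s := by linarith
          have hdd : (β / p) / s = -((β / p) / (-s)) := by rw [div_neg]; ring
          have hd1 : (β / p) / (-s) < 1 := by rw [hdd] at h1; linarith
          have h2 : β / p < -s := (div_lt_one hns).mp hd1
          have : β < p * (-s) := by rw [div_lt_iff₀ hp] at h2; linarith
          linarith [hAm.2]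
        · have h2 : s < β / p := by
            by_contra hc
            push_neg at hc
            have : β ≤ p * s := (div_le_iff₀' hp).mp hc
            linarith [hAm.1]
          calc (1 : ℝ) < (β / p) / s := by
                rw [lt_div_iff₀ hpos, one_mul]; exact h2
            _ = (β / p) / s := rfl
      rw [Set.indicator_of_mem hxE, hUx, Set.indicator_of_mem (hUx ▸ hA)]
      rw [hU, if_neg hps0, harg]
    · have hAm : ¬(-β < -(p * s) ∧ -(p * s) ≤ β) := by
        rw [hUx] at hA; exact hA
      have hxE : x ∉ Eβ := by
        rw [hE]
        rintro ⟨-, -, hcond⟩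
        apply hcond
        rw [← hs] at hcond ⊢
        rw [Set.mem_Ioc]
        push_neg at hAm
        rcases lt_or_gt_of_ne hs0 with hneg | hpos
        · -- s < 0
          have h3 : β < p * (-s) := by
            have h4 : -β < -(p * s) := by nlinarith
            have := hAm h4
            linarith
          have hcp : β / p < -s := by rw [div_lt_iff₀ hp]; linarith
          have hns : (0:ℝ) < -s := by linarith
          have hd1 : (β / p) / (-s) < 1 := (div_lt_one hns).mpr hcp
          have hdd : (β / p) / s = -((β / p) / (-s)) := by
            rw [div_neg]; ring
          constructor
          · rw [hdd]; linarith
          · have : (β / p) / s < 0 := div_neg_of_pos_of_neg (div_pos hβ hp) hneg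
            linarith
        · -- s > 0
          have h3 : β ≤ p * s := by
            by_contra hc
            push_neg at hc
            have := hAm (by nlinarith)
            nlinarith
          constructor
          · have : (0:ℝ) < (β / p) / s := div_pos (div_pos hβ hp) hpos
            linarith
          · rw [div_le_one hpos, div_le_iff₀ hp]
            nlinarith
      rw [Set.indicator_of_notMem hxE, Set.indicator_of_notMem hA]
  · have hxE : x ∉ Eβ := by rw [hE]; rintro ⟨h, -⟩; exact hxI h
    rw [Set.indicator_of_notMem hxE, Set.indicator_of_notMem hxI]
end
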